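/- arXiv:1809.10637 — 9 statements merged into one kernel-verified Lean document; each statement's English description precedes it below -/
import Mathlib

section
/- Let n ≥ 2 and let v = (v_1, …, v_n) be a constant vector of real numbers (v_i = v_j for all i, j). Then the utility vector u(v) admits no Pareto improvement: there is no vector w = (w_1, …, w_n) ∈ ℝ^n such that u_i(w) ≥ u_i(v) for all i and u_k(w) > u_k(v) for at least one k, where u_i(x) = x_i − max_{j ≠ i} x_j. -/
/-- The finset of all players other than `i` is nonempty when there are at least two players. -/
lemma eraseNonempty {n : ℕ} (hn : 2 ≤ n) (i : Fin n) :
    (Finset.univ.erase i).Nonempty := by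
  rw [← Finset.card_pos, Finset.card_erase_of_mem (Finset.mem_univ i), Finset.card_univ,
    Fintype.card_fin]
  omega

/-- The single-envy utility of player `i`: her own benefit minus the maximum benefit
of any other player. -/
noncomputable def singleEnvyUtility {n : ℕ} (hn : 2 ≤ n) (v : Fin n → ℝ) (i : Fin n) : ℝ :=
  v i - (Finset.univ.erase i).sup' (eraseNonempty hn i) v

/-- If the benefit vector is constant then the resulting utility vector admits no Pareto
improvement: no alternative benefit vector `w` makes every player's utility at least as
large with at least one strict improvement. -/
theorem constant_benefits_pareto_efficient {n : ℕ} (hn : 2 ≤ n) (v : Fin n → ℝ)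
    (hconst : ∀ i j : Fin n, v i = v j) :
    ¬ ∃ w : Fin n → ℝ,
        (∀ i : Fin n, singleEnvyUtility hn v i ≤ singleEnvyUtility hn w i) ∧
        (∃ k : Fin n, singleEnvyUtility hn v k < singleEnvyUtility hn w k) := by
  have hv0 : ∀ i : Fin n, singleEnvyUtility hn v i = 0 := by
    intro i
    have hs : (Finset.univ.erase i).sup' (eraseNonempty hn i) v = v i := by
      apply le_antisymm
      · exact Finset.sup'_le _ _ fun j _ => le_of_eq (hconst j i)
      · obtain ⟨j, hj⟩ := eraseNonempty hn i
        exact le_trans (le_of_eq (hconst i j)) (Finset.le_sup' v hj)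
    simp [singleEnvyUtility, hs]
  rintro ⟨w, hall, k, hk⟩
  rw [hv0 k] at hk
  -- w k exceeds every other coordinate
  have hkpos : (Finset.univ.erase k).sup' (eraseNonempty hn k) w < w k := by
    unfold singleEnvyUtility at hk; linarith
  obtain ⟨j, hj⟩ := eraseNonempty hn k
  have hjk : j ≠ k := (Finset.mem_erase.mp hj).1
  have hwj : w j < w k := lt_of_le_of_lt (Finset.le_sup' w hj) hkpos
  have hk_mem : k ∈ Finset.univ.erase j := Finset.mem_erase.mpr ⟨(Ne.symm hjk), Finset.mem_univ k⟩
  have hle : w k ≤ (Finset.univ.erase j).sup' (eraseNonempty hn j) w := Finset.le_sup' w hk_mem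
  have hj0 := hall j
  rw [hv0 j] at hj0
  unfold singleEnvyUtility at hj0
  linarith
end

section
/- Let n ≥ 2, let c = (c_1, …, c_n) be a vector of natural-number capacities, and let v = (v_1, …, v_n) be a feasible benefit vector, i.e., 0 ≤ v_j ≤ c_j for all j. Let i be an index maximizing v (v_i ≥ v_j for all j) and let V = max_{j ≠ i} v_j. If v is Pareto optimal — that is, there is no feasible vector w (0 ≤ w_j ≤ c_j for all j) with u_k(w) ≥ u_k(v) for all players k and u_k(w) > u_k(v) for at least one k — then for every j ≠ i we have v_j = min(V, c_j). -/
/-- The single-envy utility (computed in the integers) of player `k` under the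
natural-number benefit vector `v`. -/
def intUtility {n : ℕ} (hn : 2 ≤ n) (v : Fin n → ℕ) (k : Fin n) : ℤ :=
  (v k : ℤ) - (Finset.univ.erase k).sup' (eraseNonempty hn k) (fun j => (v j : ℤ))

/-- Characterization of Pareto-optimal feasible benefit vectors for multiparty set union:
everyone except the maximizer `i` gets `min V (c j)` where `V` is the largest benefit
among players other than `i`. -/
theorem pareto_optimal_characterization {n : ℕ} (hn : 2 ≤ n) (c v : Fin n → ℕ)
    (hfeas : ∀ j : Fin n, v j ≤ c j)
    (i : Fin n) (hi : ∀ j : Fin n, v j ≤ v i)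
    (hPO : ¬ ∃ w : Fin n → ℕ,
        (∀ j : Fin n, w j ≤ c j) ∧
        (∀ k : Fin n, intUtility hn v k ≤ intUtility hn w k) ∧
        (∃ k : Fin n, intUtility hn v k < intUtility hn w k)) :
    ∀ j : Fin n, j ≠ i →
      v j = min ((Finset.univ.erase i).sup' (eraseNonempty hn i) v) (c j) := by
  intro j hj
  by_contra hne
  set V := (Finset.univ.erase i).sup' (eraseNonempty hn i) v with hV
  have hVle : V ≤ v i := Finset.sup'_le _ _ fun l _ => hi l
  have hjV : v j ≤ V := Finset.le_sup' v (Finset.mem_erase.2 ⟨hj, Finset.mem_univ j⟩)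
  have hlt : v j < min V (c j) := lt_of_le_of_ne (le_min hjV (hfeas j)) hne
  set m := min V (c j) with hm
  set w := Function.update v j m with hw
  have hwj : w j = m := Function.update_self j m v
  have hwl : ∀ l, l ≠ j → w l = v l := fun l hl => Function.update_of_ne hl m v
  have hle : ∀ l, v l ≤ w l := by
    intro l
    by_cases h : l = j
    · subst h; rw [hwj]; exact hlt.le
    · rw [hwl l h]
  obtain ⟨t, ht, htV⟩ := Finset.exists_mem_eq_sup' (eraseNonempty hn i) v
  have hti : t ≠ i := (Finset.mem_erase.1 ht).1
  have hmv : ∀ k : Fin n, k ≠ j → ∃ s, s ∈ Finset.univ.erase k ∧ m ≤ v s := by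
    intro k hk
    by_cases hkt : k = t
    · refine ⟨i, Finset.mem_erase.2 ⟨?_, Finset.mem_univ _⟩, le_trans (min_le_left _ _) hVle⟩
      subst hkt; exact fun h => hti h.symm
    · exact ⟨t, Finset.mem_erase.2 ⟨fun h => hkt h.symm, Finset.mem_univ _⟩,
        le_trans (min_le_left _ _) (le_of_eq htV)⟩
  have hsup : ∀ k : Fin n, (Finset.univ.erase k).sup' (eraseNonempty hn k) (fun l => (w l : ℤ))
      = (Finset.univ.erase k).sup' (eraseNonempty hn k) (fun l => (v l : ℤ)) := by
    intro k
    apply le_antisymm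
    · apply Finset.sup'_le
      intro l hl
      by_cases h : l = j
      · have hk : k ≠ j := fun hkj => (Finset.mem_erase.1 hl).1 (h.trans hkj.symm)
        obtain ⟨s, hs, hms⟩ := hmv k hk
        calc (w l : ℤ) = (m : ℤ) := by rw [h, hwj]
          _ ≤ (v s : ℤ) := by exact_mod_cast hms
          _ ≤ _ := Finset.le_sup' (fun x => (v x : ℤ)) hs
      · rw [hwl l h]; exact Finset.le_sup' (fun x => (v x : ℤ)) hl
    · apply Finset.sup'_le
      intro l hl
      calc (v l : ℤ) ≤ (w l : ℤ) := by exact_mod_cast hle l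
        _ ≤ _ := Finset.le_sup' (fun x => (w x : ℤ)) hl
  apply hPO
  refine ⟨w, ?_, ?_, ⟨j, ?_⟩⟩
  · intro l
    by_cases h : l = j
    · subst h; rw [hwj]; exact min_le_right _ _
    · rw [hwl l h]; exact hfeas l
  · intro k
    simp only [intUtility, hsup k]
    exact sub_le_sub_right (by exact_mod_cast hle k) _
  · simp only [intUtility, hsup j]
    refine sub_lt_sub_right ?_ _
    rw [hwj]
    exact_mod_cast hlt
end

section
/- Let ι be a finite type of players with decidable equality, and let each player k hold a finset x_k of elements of a universe α. For a finset S of players and k ∈ S, let c_S(k) = |(⋃_{j ∈ S, j ≠ k} x_j) \ x_k|. Define V : Finset ι → ℕ recursively by V(S) = 0 if |S| ≤ 1 and otherwise V(S) = min( min_{k ∈ S} ( c_S(k) + V(S \ {k}) ), max_{k ∈ S} c_S(k) ). Then for every finset S with |S| ≥ 2 and every k ∈ S, the information benefit v_k = min(V(S), c_S(k)) assigned by the multiparty set union mechanism satisfies v_k ≥ V(S) − V(S \ {k}); hence every all-or-nothing player prefers to submit its set rather than withdraw. -/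
/-- `capacity x S k` is the number of elements that player `k` could learn from the other
players in the coalition `S`, i.e. `|(⋃_{j ∈ S, j ≠ k} x_j) \ x_k|`. -/
def capacity {ι α : Type*} [DecidableEq ι] [DecidableEq α]
    (x : ι → Finset α) (S : Finset ι) (k : ι) : ℕ :=
  (((S.erase k).biUnion x) \ x k).card

/-- The unified benefit level `V(S)` computed by the multiparty set union mechanism:
`V(S) = 0` if `|S| ≤ 1`, and otherwise
`V(S) = min( min_{k ∈ S} (c_S(k) + V(S \ {k})), max_{k ∈ S} c_S(k) )`. -/
def mechV {ι α : Type*} [DecidableEq ι] [DecidableEq α]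
    (x : ι → Finset α) (S : Finset ι) : ℕ :=
  if h : S.card ≤ 1 then 0
  else
    have hne : S.attach.Nonempty := by
      rw [Finset.attach_nonempty_iff]
      exact Finset.card_pos.mp (by omega)
    min (S.attach.inf' hne fun k => capacity x S k.1 + mechV x (S.erase k.1))
        (S.attach.sup' hne fun k => capacity x S k.1)
termination_by S.card
decreasing_by exact Finset.card_erase_lt_of_mem k.2

/-- Truthfulness of the multiparty set union mechanism for all-or-nothing players:
every participant's benefit `min(V(S), c_S(k))` is at least the drop `V(S) − V(S \ {k})`
it would cause by withdrawing. -/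
theorem set_union_truthful {ι α : Type*} [Fintype ι] [DecidableEq ι] [DecidableEq α]
    (x : ι → Finset α) (S : Finset ι) (hS : 2 ≤ S.card) (k : ι) (hk : k ∈ S) :
    min (mechV x S) (capacity x S k) ≥ mechV x S - mechV x (S.erase k) := by
  have key : mechV x S ≤ capacity x S k + mechV x (S.erase k) := by
    rw [mechV]
    have h : ¬ S.card ≤ 1 := by omega
    simp only [h, dif_neg, not_false_iff]
    refine le_trans (min_le_left _ _) ?_
    exact Finset.inf'_le _ (Finset.mem_attach _ ⟨k, hk⟩)
  omega
end

section
/- Let ι be a finite type of players with decidable equality, and let each player k hold a finset x_k of elements of a universe α. For a finset S of players and k ∈ S, let c_S(k) = |(⋃_{j ∈ S, j ≠ k} x_j) \ x_k|, and define V : Finset ι → ℕ recursively by V(S) = 0 if |S| ≤ 1 and otherwise V(S) = min( min_{k ∈ S} ( c_S(k) + V(S \ {k}) ), max_{k ∈ S} c_S(k) ). Then V cannot be effectively increased while preserving truthfulness: for every finset S with |S| ≥ 2, if V(S) < max_{k ∈ S} c_S(k) and V' ∈ ℕ satisfies V' > V(S), then there exists a player k ∈ S with c_S(k) + V(S \ {k})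 < V', i.e., player k would prefer not to participate under the unified benefit level V'. -/
/-- The unified benefit level `V(S)` cannot be effectively increased while preserving
truthfulness: if `V(S) < max_{k ∈ S} c_S(k)` and `V' > V(S)`, then some player `k ∈ S`
has `c_S(k) + V(S \ {k}) < V'`, i.e. player `k` would prefer not to participate under
the unified benefit level `V'`. -/
theorem set_union_V_maximal {ι α : Type*} [Fintype ι] [DecidableEq ι] [DecidableEq α]
    (x : ι → Finset α) (S : Finset ι) (hS : 2 ≤ S.card)
    (hlt : mechV x S <
      S.sup' (Finset.card_pos.mp (by omega)) (fun k => capacity x S k))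
    (V' : ℕ) (hV' : mechV x S < V') :
    ∃ k ∈ S, capacity x S k + mechV x (S.erase k) < V' := by
  have h1 : ¬ S.card ≤ 1 := by omega
  have hne : S.attach.Nonempty := by
    rw [Finset.attach_nonempty_iff]
    exact Finset.card_pos.mp (by omega)
  have heq : mechV x S =
      min (S.attach.inf' hne fun k => capacity x S k.1 + mechV x (S.erase k.1))
        (S.attach.sup' hne fun k => capacity x S k.1) := by
    rw [mechV, dif_neg h1]
  rw [heq] at hV' hlt
  have hsup : (S.attach.sup' hne fun k => capacity x S k.1)
      = S.sup' (Finset.card_pos.mp (by omega)) (fun k => capacity x S k) := by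
    apply le_antisymm
    · exact Finset.sup'_le _ _ fun k _ => Finset.le_sup' _ k.2
    · exact Finset.sup'_le _ _ fun k hk =>
        Finset.le_sup' (fun k : {a // a ∈ S} => capacity x S k.1)
          (Finset.mem_attach _ ⟨k, hk⟩)
  rw [hsup] at hlt
  have hmin : min (S.attach.inf' hne fun k => capacity x S k.1 + mechV x (S.erase k.1))
      (S.attach.sup' hne fun k => capacity x S k.1)
      = S.attach.inf' hne fun k => capacity x S k.1 + mechV x (S.erase k.1) := by
    rcases min_cases (S.attach.inf' hne fun k => capacity x S k.1 + mechV x (S.erase k.1))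
      (S.attach.sup' hne fun k => capacity x S k.1) with ⟨h, _⟩ | ⟨h, h'⟩
    · exact h
    · omega
  rw [hmin] at hV'
  obtain ⟨k, _, hk⟩ := Finset.exists_mem_eq_inf' hne
    (fun k => capacity x S k.1 + mechV x (S.erase k.1))
  exact ⟨k.1, k.2, by omega⟩
end

section
/- Let ι be a nonempty finite type with decidable equality, let x : ι → Finset α assign a finite set to each player, and let i ∈ ι. If z_{−i} denotes the union ⋃_{j ≠ i} x_j, then |z_{−i} \ x_i| = |⋃_{j} x_j| − |x_i|. Consequently, in the multiparty set union mechanism the information benefit of player i, v_i = min(V, |z_{−i} \ x_i|), depends on player i's input only through its cardinality |x_i|, so players reporting inputs of equal size receive equal information benefit (symmetry). -/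
/-- In the multiparty set union mechanism, `|z_{-i} \ x_i| = |⋃_j x_j| − |x_i|`, where
`z_{-i} = ⋃_{j ≠ i} x_j`; consequently the information benefit `min V |z_{-i} \ x_i|`
depends only on the cardinality of player `i`'s input, so players reporting inputs of
equal size receive equal information benefit (symmetry). -/
theorem set_union_symmetry {ι α : Type*} [Fintype ι] [Nonempty ι] [DecidableEq ι]
    [DecidableEq α] (x : ι → Finset α) :
    (∀ i : ι,
      ((Finset.univ.erase i).biUnion x \ x i).card = (Finset.univ.biUnion x).card - (x i).card)
    ∧ (∀ (V : ℕ) (i j : ι), (x i).card = (x j).card →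
        min V (((Finset.univ.erase i).biUnion x \ x i).card) =
          min V (((Finset.univ.erase j).biUnion x \ x j).card)) := by
  have key : ∀ i : ι,
      ((Finset.univ.erase i).biUnion x \ x i).card
        = (Finset.univ.biUnion x).card - (x i).card := by
    intro i
    have hset : (Finset.univ.erase i).biUnion x \ x i = Finset.univ.biUnion x \ x i := by
      ext a
      simp only [Finset.mem_sdiff, Finset.mem_biUnion, Finset.mem_erase, Finset.mem_univ,
        true_and, and_true]
      constructor
      · rintro ⟨⟨j, _, hj⟩, ha⟩
        exact ⟨⟨j, hj⟩, ha⟩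
      · rintro ⟨⟨j, hj⟩, ha⟩
        refine ⟨⟨j, ?_, hj⟩, ha⟩
        rintro rfl; exact ha hj
    rw [hset, Finset.card_sdiff_of_subset]
    intro a ha
    exact Finset.mem_biUnion.2 ⟨i, Finset.mem_univ i, ha⟩
  refine ⟨key, fun V i j hij => ?_⟩
  rw [key i, key j, hij]
end

section
/- Let E be a real inner product space, let n ≥ 2, and let a_1, …, a_n ∈ E, with ā = (1/n) ∑_{i=1}^n a_i and b = (1/(n−1)) ∑_{i=2}^n a_i. Define each player's utility under full participation as u_1 = ‖a_1 − ā‖² − max_{j ≥ 2} ‖a_j − ā‖², and player 1's utility upon withdrawing as û_1 = 0 − max_{j ≥ 2} ( ‖a_j − ā‖² − ‖b − ā‖² ). Then u_1 ≥ û_1; that is, for the average point mechanism that returns the average of the submitted points to every participant and nothing to nonparticipants, full participation is a dominant strategy for all-or-nothing players with value function v(y) = −‖y − ā‖². -/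
namespace Finset

variable {ι : Type*} {s : Finset ι}

lemma sup'_sub_const {G : Type*} [AddGroup G] [LinearOrder G] [AddRightMono G]
    (hs : s.Nonempty) (f : ι → G) (c : G) :
    s.sup' hs (fun j => f j - c) = s.sup' hs f - c :=
  (map_finset_sup' (OrderIso.subRight c) hs f).symm

variable [DecidableEq ι] {i : ι}

lemma average_erase_sub_average {𝕜 E : Type*} [Field 𝕜] [CharZero 𝕜] [AddCommGroup E]
    [Module 𝕜 E] (f : ι → E) (hi : i ∈ s) (hs : 1 < #s) :
    ((#s : 𝕜) - 1)⁻¹ • ∑ j ∈ s.erase i, f j - (#s : 𝕜)⁻¹ • ∑ j ∈ s, f j =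
      ((#s : 𝕜) - 1)⁻¹ • ((#s : 𝕜)⁻¹ • ∑ j ∈ s, f j - f i) := by
  have hs₀ : (#s : 𝕜) ≠ 0 := by exact_mod_cast (zero_lt_one.trans hs).ne'
  have hs₁ : (#s : 𝕜) - 1 ≠ 0 := sub_ne_zero.2 (by exact_mod_cast hs.ne')
  rw [sum_erase_eq_sub hi]
  match_scalars <;> field_simp; ring

lemma norm_average_erase_sub_average_le {E : Type*} [SeminormedAddCommGroup E]
    [NormedSpace ℝ E] (f : ι → E) (hi : i ∈ s) (hs : 1 < #s) :
    ‖((#s : ℝ) - 1)⁻¹ • ∑ j ∈ s.erase i, f j - (#s : ℝ)⁻¹ • ∑ j ∈ s, f j‖ ≤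
      ‖f i - (#s : ℝ)⁻¹ • ∑ j ∈ s, f j‖ := by
  have hs₁ : (1 : ℝ) ≤ #s - 1 := by
    rw [le_sub_iff_add_le]
    exact_mod_cast hs
  rw [average_erase_sub_average f hi hs, norm_smul, norm_sub_rev,
    Real.norm_of_nonneg (by positivity)]
  exact mul_le_of_le_one_left (norm_nonneg _) (inv_le_one_of_one_le₀ hs₁)

end Finset

/-- Truthfulness of the average point mechanism for all-or-nothing players with value
function `v(y) = −‖y − ā‖²`: player 1's single-envy utility under full participation,
`u₁ = ‖a₁ − ā‖² − max_{j≠1} ‖a_j − ā‖²`, is at least her utility upon withdrawing,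
`û₁ = 0 − max_{j≠1} (‖a_j − ā‖² − ‖b − ā‖²)`. -/
theorem average_point_truthful {E : Type*} [NormedAddCommGroup E] [InnerProductSpace ℝ E]
    {n : ℕ} (hn : 2 ≤ n) (a : Fin n → E) (abar b : E)
    (habar : abar = (n : ℝ)⁻¹ • ∑ i, a i)
    (hb : b = ((n : ℝ) - 1)⁻¹ •
      ∑ i ∈ Finset.univ.erase (⟨0, by omega⟩ : Fin n), a i) :
    ‖a ⟨0, by omega⟩ - abar‖ ^ 2 -
        (Finset.univ.erase (⟨0, by omega⟩ : Fin n)).sup'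
          (eraseNonempty hn _) (fun j => ‖a j - abar‖ ^ 2)
      ≥ 0 -
        (Finset.univ.erase (⟨0, by omega⟩ : Fin n)).sup'
          (eraseNonempty hn _) (fun j => ‖a j - abar‖ ^ 2 - ‖b - abar‖ ^ 2) := by
  have hdist : ‖b - abar‖ ≤ ‖a ⟨0, by omega⟩ - abar‖ := by
    have h := Finset.norm_average_erase_sub_average_le a (Finset.mem_univ ⟨0, by omega⟩)
      (by rw [Finset.card_fin]; omega)
    rwa [Finset.card_fin, ← habar, ← hb] at h
  have hsq := pow_le_pow_left₀ (norm_nonneg _) hdist 2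
  rw [Finset.sup'_sub_const]
  linarith
end

section
/- Let ι be a type with decidable equality, let V : Finset ι → ℝ be monotone (S' ⊆ S implies V(S') ≤ V(S)), let T be a finset of ι, and let i, j ∈ T with i ≠ j. Then max( V({j}), V(T \ {j}) ) + V(T \ {i}) ≥ max( V({i}), V(T \ {i}) ) + max( V({j}), V(T \ {i, j}) ). -/
/-- The key combinatorial max-inequality in the truthfulness proof of the general
information sharing mechanism: for a monotone subgroup value function `V` and distinct
`i, j ∈ T`,
`max(V({j}), V(T\{j})) + V(T\{i}) ≥ max(V({i}), V(T\{i})) + max(V({j}), V(T\{i,j}))`. -/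
theorem key_max_inequality {ι : Type*} [DecidableEq ι] (V : Finset ι → ℝ)
    (hV : ∀ S' S : Finset ι, S' ⊆ S → V S' ≤ V S)
    (T : Finset ι) (i j : ι) (hi : i ∈ T) (hj : j ∈ T) (hij : i ≠ j) :
    max (V {j}) (V (T.erase j)) + V (T.erase i) ≥
      max (V {i}) (V (T.erase i)) + max (V {j}) (V ((T.erase i).erase j)) := by
  have had : V {i} ≤ V (T.erase j) := by
    apply hV; simp [Finset.singleton_subset_iff, Finset.mem_erase, hi, hij]
  have hcb : V {j} ≤ V (T.erase i) := by
    apply hV; simp [Finset.singleton_subset_iff, Finset.mem_erase, hj, hij.symm]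
  have heb : V ((T.erase i).erase j) ≤ V (T.erase i) := hV _ _ (Finset.erase_subset _ _)
  have hed : V ((T.erase i).erase j) ≤ V (T.erase j) := by
    apply hV
    rw [Finset.erase_right_comm]
    exact Finset.erase_subset _ _
  rcases le_total (V {i}) (V (T.erase i)) with h | h <;>
    rcases le_total (V {j}) (V ((T.erase i).erase j)) with h2 | h2 <;>
    simp [max_eq_left, max_eq_right, h, h2, le_max_iff, max_le_iff] <;> linarith [le_max_left (V {j}) (V (T.erase j)), le_max_right (V {j}) (V (T.erase j))]
end

section
/- Let ι be a type with decidable equality, let V : Finset ι → ℝ be monotone (S' ⊆ S implies V(S') ≤ V(S)), let T be a finset of ι, and let i, j ∈ T with i ≠ j. Then min( V(T) − V({i}), V(T) − V(T \ {i}) ) ≥ min( V(T) − V({j}), V(T) − V(T \ {j}) ) − min( V(T \ {i}) − V({j}), V(T \ {i}) − V(T \ {i, j}) ). -/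
/-- For a monotone subgroup value function `V` and distinct players `i, j ∈ T`, the
candidate rewardable contribution of `i` within `T` dominates the drop in `j`'s candidate
contribution caused by removing `i`:
`min(V(T) − V({i}), V(T) − V(T\{i})) ≥
   min(V(T) − V({j}), V(T) − V(T\{j})) − min(V(T\{i}) − V({j}), V(T\{i}) − V(T\{i,j}))`. -/
theorem contribution_inequality {ι : Type*} [DecidableEq ι] (V : Finset ι → ℝ)
    (hV : ∀ S' S : Finset ι, S' ⊆ S → V S' ≤ V S)
    (T : Finset ι) (i j : ι) (hi : i ∈ T) (hj : j ∈ T) (hij : i ≠ j) :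
    min (V T - V {i}) (V T - V (T.erase i)) ≥
      min (V T - V {j}) (V T - V (T.erase j)) -
        min (V (T.erase i) - V {j}) (V (T.erase i) - V ((T.erase i).erase j)) := by
  have h1 : V {i} ≤ V (T.erase j) :=
    hV _ _ (Finset.singleton_subset_iff.mpr (Finset.mem_erase.mpr ⟨hij, hi⟩))
  have h2 : V {j} ≤ V (T.erase i) :=
    hV _ _ (Finset.singleton_subset_iff.mpr (Finset.mem_erase.mpr ⟨hij.symm, hj⟩))
  have h3 : V ((T.erase i).erase j) ≤ V (T.erase i) := hV _ _ (Finset.erase_subset _ _)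
  have h4 : V ((T.erase i).erase j) ≤ V (T.erase j) := by
    rw [Finset.erase_right_comm]
    exact hV _ _ (Finset.erase_subset _ _)
  have hm1 := min_le_left (V T - V {j}) (V T - V (T.erase j))
  have hm2 := min_le_right (V T - V {j}) (V T - V (T.erase j))
  rcases min_cases (V (T.erase i) - V {j}) (V (T.erase i) - V ((T.erase i).erase j)) with
    ⟨he, _⟩ | ⟨he, _⟩ <;> rw [ge_iff_le, he] <;>
    refine le_min ?_ ?_ <;> linarith
end

section
/- Let ι be a finite type of players with decidable equality, and let V : Finset ι → ℝ be monotone (S' ⊆ S implies V(S') ≤ V(S)). For a finset S and k ∈ S, define φ_k(S) = max_{T ⊆ S, k ∈ T} min( V(T) − V({k}), V(T) − V(T \ {k}) ). Then for every finset S and every pair of distinct players i, j ∈ S, the rewardable contribution of i exceeds the loss its departure inflicts on j: φ_i(S) ≥ φ_j(S) − φ_j(S \ {i}). -/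
/-- The rewardable contribution of player `i` in the coalition `S`:
`φ_i(S) = max_{T ⊆ S, i ∈ T} min( V(T) − V({i}), V(T) − V(T \ {i}) )`.
(When `i ∈ S`, `insert i S = S`, so the maximization ranges exactly over the
subsets `T ⊆ S` containing `i`.) -/
noncomputable def phi {ι : Type*} [DecidableEq ι] (V : Finset ι → ℝ)
    (S : Finset ι) (i : ι) : ℝ :=
  ((insert i S).powerset.filter (fun T => i ∈ T)).sup'
    ⟨{i}, by simp⟩
    (fun T => min (V T - V {i}) (V T - V (T.erase i)))

lemma le_phi {ι : Type*} [DecidableEq ι] (V : Finset ι → ℝ) (S : Finset ι) (i : ι)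
    (U : Finset ι) (hU : i ∈ U) (hUS : U ⊆ insert i S) :
    min (V U - V {i}) (V U - V (U.erase i)) ≤ phi V S i := by
  unfold phi
  exact Finset.le_sup' (fun T => min (V T - V {i}) (V T - V (T.erase i)))
    (Finset.mem_filter.mpr ⟨Finset.mem_powerset.mpr hUS, hU⟩)

/-- The rewardable contribution of player `i` in coalition `S` exceeds the loss its
departure inflicts on any other player `j`: `φ_i(S) ≥ φ_j(S) − φ_j(S \ {i})`. -/
theorem phi_ge_departure_loss {ι : Type*} [Fintype ι] [DecidableEq ι] (V : Finset ι → ℝ)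
    (hV : ∀ S' S : Finset ι, S' ⊆ S → V S' ≤ V S)
    (S : Finset ι) (i j : ι) (hi : i ∈ S) (hj : j ∈ S) (hij : i ≠ j) :
    phi V S i ≥ phi V S j - phi V (S.erase i) j := by
  -- φ_i(S) ≥ 0 (take U = {i})
  have hphi_nonneg : 0 ≤ phi V S i := by
    have h := le_phi V S i {i} (Finset.mem_singleton_self i)
      (Finset.singleton_subset_iff.mpr (Finset.mem_insert_self i S))
    have h0 : V (({i} : Finset ι).erase i) ≤ V {i} := hV _ _ (Finset.erase_subset _ _)
    have : min (V ({i} : Finset ι) - V {i}) (V ({i} : Finset ι) - V (({i} : Finset ι).erase i))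
        = 0 := by
      rw [min_eq_left (by linarith)]
      ring
    linarith [h, this]
  -- pick an optimal coalition T for φ_j(S)
  obtain ⟨T, hTmem, hTeq⟩ := Finset.exists_mem_eq_sup'
    (⟨{j}, by simp⟩ : (((insert j S).powerset.filter (fun T => j ∈ T))).Nonempty)
    (fun T => min (V T - V {j}) (V T - V (T.erase j)))
  have hphiS : phi V S j = min (V T - V {j}) (V T - V (T.erase j)) := hTeq
  rw [Finset.mem_filter, Finset.mem_powerset] at hTmem
  obtain ⟨hTsub, hjT⟩ := hTmem
  have hTS : T ⊆ S := by
    rwa [Finset.insert_eq_self.mpr hj] at hTsub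
  have hjSi : j ∈ S.erase i := Finset.mem_erase.mpr ⟨hij.symm, hj⟩
  by_cases hiT : i ∈ T
  · -- main case: i ∈ T
    set a := V T with ha
    set b := V (T.erase i) with hb
    set c := V (T.erase j) with hc
    set d := V ((T.erase i).erase j) with hd
    set e := V {i} with he
    set f := V {j} with hf
    -- bound φ_j(S \ {i}) from below using T.erase i
    have hlow : min (b - f) (b - d) ≤ phi V (S.erase i) j := by
      have hmem : j ∈ T.erase i := Finset.mem_erase.mpr ⟨hij.symm, hjT⟩
      have hsub : T.erase i ⊆ insert j (S.erase i) :=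
        (Finset.erase_subset_erase i hTS).trans (Finset.subset_insert _ _)
      exact le_phi V (S.erase i) j (T.erase i) hmem hsub
    -- bound φ_i(S) from below using T
    have hup : min (a - e) (a - b) ≤ phi V S i :=
      le_phi V S i T hiT (hTS.trans (Finset.subset_insert _ _))
    -- monotonicity facts
    have hiTj : i ∈ T.erase j := Finset.mem_erase.mpr ⟨hij, hiT⟩
    have hec : e ≤ c := hV _ _ (Finset.singleton_subset_iff.mpr hiTj)
    have hfb : f ≤ b := hV _ _ (Finset.singleton_subset_iff.mpr
      (Finset.mem_erase.mpr ⟨hij.symm, hjT⟩))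
    have hdb : d ≤ b := hV _ _ (Finset.erase_subset _ _)
    have hdc : d ≤ c := hV _ _ (Finset.erase_subset_erase _ (Finset.erase_subset _ _))
    -- key arithmetic inequality
    have key : min (a - f) (a - c) - min (b - f) (b - d) ≤ min (a - e) (a - b) := by
      rcases le_total e b with hcase | hcase
      · have h1 : min (a - e) (a - b) = a - b := min_eq_right (by linarith)
        rw [h1]
        rcases le_total f d with hfd | hfd
        · have h2 : min (b - f) (b - d) = b - d := min_eq_right (by linarith)
          have h3 : min (a - f) (a - c) ≤ a - c := min_le_right _ _
          rw [h2]; linarith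
        · have h2 : min (b - f) (b - d) = b - f := min_eq_left (by linarith)
          have h3 : min (a - f) (a - c) ≤ a - f := min_le_left _ _
          rw [h2]; linarith
      · have h1 : min (a - e) (a - b) = a - e := min_eq_left (by linarith)
        rw [h1]
        have hmin : (0:ℝ) ≤ min (b - f) (b - d) := le_min (by linarith) (by linarith)
        have h3 : min (a - f) (a - c) ≤ a - c := min_le_right _ _
        linarith
    rw [hphiS]
    have : min (a - f) (a - c) - phi V (S.erase i) j ≤ min (a - f) (a - c) - min (b - f) (b - d) := by
      linarith
    linarith
  · -- i ∉ T: T ⊆ S \ {i}, so φ_j(S\{i}) ≥ φ_j(S), and φ_i(S) ≥ 0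
    have hsub : T ⊆ insert j (S.erase i) :=
      (Finset.subset_erase.mpr ⟨hTS, hiT⟩).trans (Finset.subset_insert _ _)
    have hlow : min (V T - V {j}) (V T - V (T.erase j)) ≤ phi V (S.erase i) j :=
      le_phi V (S.erase i) j T hjT hsub
    rw [hphiS]
    linarith
end
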